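/- arXiv:1910.07750 — 2 statements merged into one kernel-verified Lean document; each statement's English description precedes it below -/
import Mathlib

section
/- Let A be a pca and ∼ an equivalence relation on A such that A is ∼-extensional, i.e., for all f, g ∈ A, if f·a ≃ g·a for every a ∈ A then f ∼ g. Then ∼ is precomplete: for every b ∈ A there exists a total f ∈ A such that for all a ∈ A, if b·a is defined then f·a ∼ b·a. -/
/-!
For `b, a ∈ A` the element `s (s (k b) (k a)) i` is always defined, and applied to `c` it
evaluates `(b·a)·c`: it postpones the possibly divergent computation of `b·a`. Whenever
`b·a = w`, this element and `w` have the same applicative behaviour, so they are `∼`-related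
by extensionality. Since `a ↦ s (s (k b) (k a)) i` is represented by a total element of `A`
(combinatory abstraction), that element witnesses precompleteness at `b`.
-/

/-- A partial combinatory algebra: a partial binary application together with
combinators `k` and `s` satisfying the usual laws. -/
structure PCA (A : Type) where
  app : A → A → Part A
  k : A
  s : A
  k_def : ∀ a : A, (app k a).Dom
  k_eq : ∀ a b : A, (app k a).bind (fun u => app u b) = Part.some a
  s_def : ∀ a : A, (app s a).Dom
  s_def2 : ∀ a b : A, ((app s a).bind fun u => app u b).Dom
  s_eq : ∀ a b c : A,
    (((app s a).bind fun u => app u b).bind fun u => app u c) =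
      (app a c).bind fun u => (app b c).bind fun v => app u v

/-- Extension of a relation on `A` to partial values: either both are
undefined, or both are defined with related values. -/
def PartRel {A : Type} (r : A → A → Prop) (x y : Part A) : Prop :=
  (¬ x.Dom ∧ ¬ y.Dom) ∨ (∃ a ∈ x, ∃ b ∈ y, r a b)

namespace PCA

variable {A : Type} (P : PCA A)

def k1 (x : A) : A := (P.app P.k x).get (P.k_def x)

def s1 (x : A) : A := (P.app P.s x).get (P.s_def x)

def s2 (x y : A) : A := ((P.app P.s x).bind fun u => P.app u y).get (P.s_def2 x y)

theorem app_k (x : A) : P.app P.k x = Part.some (P.k1 x) := (Part.some_get _).symm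

theorem app_s (x : A) : P.app P.s x = Part.some (P.s1 x) := (Part.some_get _).symm

theorem app_k1 (x c : A) : P.app (P.k1 x) c = Part.some x := by
  simpa only [app_k, Part.bind_some] using P.k_eq x c

theorem bind_app_s (x y : A) :
    ((P.app P.s x).bind fun u => P.app u y) = Part.some (P.s2 x y) :=
  (Part.some_get _).symm

theorem app_s1 (x y : A) : P.app (P.s1 x) y = Part.some (P.s2 x y) := by
  simpa only [app_s, Part.bind_some] using P.bind_app_s x y

theorem app_s2 (x y c : A) :
    P.app (P.s2 x y) c = (P.app x c).bind fun u => (P.app y c).bind fun v => P.app u v := by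
  simpa only [bind_app_s, Part.bind_some] using P.s_eq x y c

def I : A := P.s2 P.k P.k

theorem app_I (c : A) : P.app P.I c = Part.some c := by
  simp only [I, app_s2, app_k, app_k1, Part.bind_some]

def delayApp (b a : A) : A := P.s2 (P.s2 (P.k1 b) (P.k1 a)) P.I

theorem app_delayApp (b a c : A) :
    P.app (P.delayApp b a) c = (P.app b a).bind fun u => P.app u c := by
  simp only [delayApp, app_s2, app_k1, app_I, Part.bind_some]

theorem app_delayApp_of_mem {b a w : A} (h : w ∈ P.app b a) (c : A) :
    P.app (P.delayApp b a) c = P.app w c := by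
  rw [app_delayApp, Part.eq_some_iff.2 h, Part.bind_some]

/-- The bracket abstraction of `delayApp b a` in the variable `a`. -/
def delayAppFun (b : A) : A :=
  P.s2 (P.s2 (P.k1 P.s) (P.s2 (P.k1 (P.s1 (P.k1 b))) P.k)) (P.k1 P.I)

theorem app_delayAppFun (b a : A) : P.app (P.delayAppFun b) a = Part.some (P.delayApp b a) := by
  simp only [delayAppFun, delayApp, app_s2, app_k1, app_k, app_s, app_s1, Part.bind_some]

end PCA

theorem extensional_precomplete_general {A : Type} (P : PCA A) (r : A → A → Prop)
    (hext : ∀ f g : A, (∀ a : A, P.app f a = P.app g a) → r f g) :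
    ∀ b : A, ∃ f : A, (∀ a : A, (P.app f a).Dom) ∧
      ∀ a : A, (P.app b a).Dom →
        ∃ u ∈ P.app f a, ∃ v ∈ P.app b a, r u v := by
  intro b
  refine ⟨P.delayAppFun b, fun a => ?_, fun a hba => ?_⟩
  · rw [P.app_delayAppFun]
    trivial
  · refine ⟨P.delayApp b a, ?_, _, Part.get_mem hba, hext _ _ ?_⟩
    · rw [P.app_delayAppFun]
      exact Part.mem_some _
    · exact P.app_delayApp_of_mem (Part.get_mem hba)

/-- If `A` is `∼`-extensional then `∼` is precomplete. -/
theorem extensional_precomplete {A : Type} (P : PCA A) (r : A → A → Prop)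
    (hr : Equivalence r)
    (hext : ∀ f g : A, (∀ a : A, P.app f a = P.app g a) → r f g) :
    ∀ b : A, ∃ f : A, (∀ a : A, (P.app f a).Dom) ∧
      ∀ a : A, (P.app b a).Dom →
        ∃ u ∈ P.app f a, ∃ v ∈ P.app b a, r u v :=
  extensional_precomplete_general P r hext
end

section
/- There exists an equivalence relation ∼ on ℕ (viewed as a generalized numbering on Kleene's first model K₁) such that K₁ is strongly ∼-extensional but ∼ is not algebraic. In fact, ∼ can be taken to extend ∼_e and to satisfy f ∼ g ⟺ (∀x, f·x ∼ g·x in the extended sense), and there are f ∼ g and z ∈ ℕ with z·f ≁ z·g. -/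
/-- Application in Kleene's first model `K₁`: `n·m = φₙ(m)`. -/
def K1 (n m : ℕ) : Part ℕ := (Denumerable.ofNat Nat.Partrec.Code n).eval m

/-- The equivalence `n ∼ₑ m` iff `φₙ(x) ≃ φₘ(x)` for all `x`. -/
def simEqK (n m : ℕ) : Prop := ∀ x : ℕ, K1 n x = K1 m x

/-!
Take `∼` to be bisimilarity for the application of `K₁`: the union of all relations `r` such that
`f r g` implies `f·x r g·x` (extended sense) for every `x`. It is the greatest fixed point of
`r ↦ {(f, g) | ∀ x, f·x r g·x}`, hence an equivalence relation satisfying exactly the strong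
extensionality equation, and it contains `∼ₑ`. Bisimilarity only compares codes through their
behaviour on arguments, whereas an application `z·f` may inspect the code `f` itself: the two
codes `0` and `encode (comp zero zero)` of the constant function `0` are bisimilar, but a code
`z` defined exactly at `0` separates them.
-/

open Nat.Partrec (Code)

namespace PartRel

variable {A : Type} {r s : A → A → Prop} {x y z : Part A}

theorem mono (h : ∀ a b, r a b → s a b) (hxy : PartRel r x y) : PartRel s x y := by
  rcases hxy with hnone | ⟨a, ha, b, hb, hab⟩
  · exact Or.inl hnone
  · exact Or.inr ⟨a, ha, b, hb, h a b hab⟩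

theorem refl (hr : ∀ a, r a a) (x : Part A) : PartRel r x x := by
  by_cases hx : x.Dom
  · exact Or.inr ⟨x.get hx, Part.get_mem hx, x.get hx, Part.get_mem hx, hr _⟩
  · exact Or.inl ⟨hx, hx⟩

theorem symm (hxy : PartRel r x y) : PartRel (flip r) y x := by
  rcases hxy with ⟨hx, hy⟩ | ⟨a, ha, b, hb, hab⟩
  · exact Or.inl ⟨hy, hx⟩
  · exact Or.inr ⟨b, hb, a, ha, hab⟩

theorem dom_iff (hxy : PartRel r x y) : x.Dom ↔ y.Dom := by
  rcases hxy with ⟨hx, hy⟩ | ⟨a, ha, b, hb, -⟩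
  · exact iff_of_false hx hy
  · exact iff_of_true (Part.dom_iff_mem.2 ⟨a, ha⟩) (Part.dom_iff_mem.2 ⟨b, hb⟩)

theorem trans (hxy : PartRel r x y) (hyz : PartRel s y z) :
    PartRel (Relation.Comp r s) x z := by
  rcases hxy with ⟨hx, hy⟩ | ⟨a, ha, b, hb, hab⟩
  · exact Or.inl ⟨hx, mt hyz.dom_iff.2 hy⟩
  · rcases hyz with ⟨hy, -⟩ | ⟨b', hb', c, hc, hbc⟩
    · exact absurd (Part.dom_iff_mem.2 ⟨b, hb⟩) hy
    · obtain rfl := Part.mem_unique hb hb'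
      exact Or.inr ⟨a, ha, c, hc, b, hab, hbc⟩

end PartRel

section Bisim

variable {α : Type} (app : α → α → Part α)

def IsBisimulation (r : α → α → Prop) : Prop :=
  ∀ f g, r f g → ∀ x, PartRel r (app f x) (app g x)

def Bisim (f g : α) : Prop :=
  ∃ r, IsBisimulation app r ∧ r f g

theorem isBisimulation_bisim : IsBisimulation app (Bisim app) := by
  rintro f g ⟨r, hr, hfg⟩ x
  exact (hr f g hfg x).mono fun a b hab => ⟨r, hr, hab⟩

variable {app}

theorem bisim_of_forall {f g : α} (h : ∀ x, PartRel (Bisim app) (app f x) (app g x)) :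
    Bisim app f g := by
  refine ⟨fun a b => Bisim app a b ∨ (a = f ∧ b = g), ?_, Or.inr ⟨rfl, rfl⟩⟩
  rintro a b (hab | ⟨rfl, rfl⟩) x
  · exact (isBisimulation_bisim app a b hab x).mono fun _ _ => Or.inl
  · exact (h x).mono fun _ _ => Or.inl

theorem bisim_iff {f g : α} : Bisim app f g ↔ ∀ x, PartRel (Bisim app) (app f x) (app g x) :=
  ⟨isBisimulation_bisim app f g, bisim_of_forall⟩

theorem bisim_refl (f : α) : Bisim app f f := by
  refine ⟨Eq, ?_, rfl⟩
  rintro f _ rfl x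
  exact PartRel.refl (fun _ => rfl) _

theorem bisim_symm {f g : α} (h : Bisim app f g) : Bisim app g f :=
  ⟨flip (Bisim app), fun a b hba x => (isBisimulation_bisim app b a hba x).symm, h⟩

theorem bisim_trans {f g h : α} (hfg : Bisim app f g) (hgh : Bisim app g h) : Bisim app f h :=
  ⟨Relation.Comp (Bisim app) (Bisim app),
    fun a c ⟨b, hab, hbc⟩ x =>
      (isBisimulation_bisim app a b hab x).trans (isBisimulation_bisim app b c hbc x),
    g, hfg, hgh⟩

variable (app) in
theorem equivalence_bisim : Equivalence (Bisim app) :=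
  ⟨bisim_refl, bisim_symm, bisim_trans⟩

theorem bisim_of_app_eq {f g : α} (h : ∀ x, app f x = app g x) : Bisim app f g :=
  bisim_of_forall fun x => h x ▸ PartRel.refl bisim_refl _

end Bisim

theorem K1_encode (c : Code) : K1 (Encodable.encode c) = c.eval := by
  funext x
  simp only [K1, Denumerable.ofNat_encode]

theorem simEqK_zero_encode_comp_zero_zero :
    simEqK 0 (Encodable.encode (Code.comp .zero .zero)) := by
  intro x
  rw [K1_encode, show K1 0 = Code.zero.eval from K1_encode .zero]
  exact (Part.bind_some _ _).symm

theorem exists_code_eval_eq_ite_zero :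
    ∃ c : Code, c.eval = fun n => if n = 0 then Part.some 0 else Part.none := by
  have hdec : Computable fun n : ℕ => decide (n = 0) :=
    (Primrec.eq.decide.comp Primrec.id (Primrec.const 0)).to_comp
  have hpart : Partrec fun n : ℕ => cond (decide (n = 0)) (Part.some 0) Part.none :=
    Partrec.cond hdec (Computable.const 0).partrec Partrec.none
  obtain ⟨c, hc⟩ := Nat.Partrec.Code.exists_code.1 (Partrec.nat_iff.1 hpart)
  refine ⟨c, hc.trans (funext fun n => ?_)⟩
  by_cases hn : n = 0 <;> simp [hn]

/-- There is an equivalence relation `∼` on `ℕ` (on `K₁`) extending `∼ₑ` and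
satisfying `f ∼ g ⟺ ∀x, f·x ∼ g·x` (extended sense); in particular `K₁` is
strongly `∼`-extensional, yet `∼` is not algebraic: there are `f ∼ g` and `z`
with `z·f ≁ z·g`. -/
theorem strong_ext_not_algebraic :
    ∃ r : ℕ → ℕ → Prop, Equivalence r ∧
      (∀ n m : ℕ, simEqK n m → r n m) ∧
      (∀ f g : ℕ, r f g ↔ ∀ x : ℕ, PartRel r (K1 f x) (K1 g x)) ∧
      (∀ f g : ℕ, (∀ x : ℕ, PartRel r (K1 f x) (K1 g x)) → r f g) ∧
      (∃ f g z : ℕ, r f g ∧ ¬ PartRel r (K1 z f) (K1 z g)) := by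
  obtain ⟨z, hz⟩ := exists_code_eval_eq_ite_zero
  have hne : Encodable.encode (Code.comp .zero .zero) ≠ 0 := by decide
  refine ⟨Bisim K1, equivalence_bisim K1, fun _ _ => bisim_of_app_eq, fun _ _ => bisim_iff,
    fun _ _ => bisim_of_forall, 0, Encodable.encode (Code.comp .zero .zero), Encodable.encode z,
    bisim_of_app_eq simEqK_zero_encode_comp_zero_zero, fun h => ?_⟩
  simpa [K1_encode, hz, hne] using h.dom_iff
end
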